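/- arXiv:1008.3262 — 2 statements merged into one kernel-verified Lean document; each statement's English description precedes it below -/
import Mathlib

section
/- Let p > 1, μ ≥ 0, and define S(A) = (μ + |A|)^{p-2} A for matrices A (with S(0)=0 when μ=0). Then for 1 < p ≤ 2 there exists a constant C₂ > 0 (depending only on p) such that for all matrices A, B (not both zero if μ = 0): (S(A) - S(B)) · (A - B) ≥ C₂ |A - B|² / (μ + |A| + |B|)^{2-p}, where X · Y denotes the Frobenius inner product. -/
/-!
Write `x = ‖A‖`, `y = ‖B‖`, `s = ⟪A, B⟫` and `φ t = (μ + t) ^ (p - 2)`. Then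
`⟪S A - S B, A - B⟫ = (φ x * x - φ y * y) * (x - y) + (φ x + φ y) * (x * y - s)` and
`‖A - B‖ ^ 2 = (x - y) ^ 2 + 2 * (x * y - s)`. The map `t ↦ φ t * t` has derivative
`φ t * (μ + (p - 1) t) / (μ + t) ≥ (p - 1) φ t ≥ (p - 1) φ (x + y)` between `x` and `y`, which
controls the first summand; `φ` is decreasing and `x * y - s ≥ 0` by Cauchy–Schwarz, which controls
the second. This gives the estimate with `C₂ = p - 1` in any real inner product space, and matrices
with the Frobenius norm form one.
-/

open Finset

noncomputable def frob {n : ℕ} (A : Matrix (Fin n) (Fin n) ℝ) : ℝ :=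
  Real.sqrt (∑ i, ∑ j, (A i j) ^ 2)

noncomputable def Smap {n : ℕ} (μ p : ℝ) (A : Matrix (Fin n) (Fin n) ℝ) :
    Matrix (Fin n) (Fin n) ℝ :=
  ((μ + frob A) ^ (p - 2) : ℝ) • A

open Real Set
open scoped RealInnerProductSpace

lemma hasDerivAt_add_rpow_mul_self (μ q t : ℝ) (ht : 0 < μ + t) :
    HasDerivAt (fun s => (μ + s) ^ q * s) (q * (μ + t) ^ (q - 1) * t + (μ + t) ^ q) t := by
  have h := ((hasDerivAt_id t).const_add μ).rpow_const (p := q) (Or.inl ht.ne')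
  simpa using h.fun_mul (hasDerivAt_id' t)

lemma sub_one_mul_rpow_le_deriv {μ p t : ℝ} (hμ : 0 ≤ μ) (hp : p ≤ 2) (ht : 0 < μ + t) :
    (p - 1) * (μ + t) ^ (p - 2) ≤ (p - 2) * (μ + t) ^ (p - 2 - 1) * t + (μ + t) ^ (p - 2) := by
  have hsplit : (μ + t) ^ (p - 2) = (μ + t) ^ (p - 2 - 1) * (μ + t) := by
    rw [← rpow_add_one ht.ne']; ring_nf
  have hpos : 0 ≤ (μ + t) ^ (p - 2 - 1) := rpow_nonneg ht.le _
  rw [hsplit]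
  nlinarith [mul_nonneg (mul_nonneg hpos hμ) (sub_nonneg.2 hp)]

lemma sub_one_mul_rpow_mul_sub_le {μ p x y : ℝ} (hμ : 0 ≤ μ) (hp1 : 1 ≤ p) (hp2 : p ≤ 2)
    (hy : 0 ≤ y) (hyx : y ≤ x) :
    (p - 1) * (μ + x + y) ^ (p - 2) * (x - y) ≤ (μ + x) ^ (p - 2) * x - (μ + y) ^ (p - 2) * y := by
  -- For `μ = y = 0` the derivative formula fails at the endpoint `t = 0`, so `y = 0` is done by hand.
  obtain rfl | hy := hy.eq_or_lt
  · have : 0 ≤ (μ + x) ^ (p - 2) * x := mul_nonneg (rpow_nonneg (by linarith) _) (by linarith)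
    simp only [add_zero, mul_zero, sub_zero]
    nlinarith
  have hD : ∀ t ∈ Icc y x, 0 < μ + t := fun t ht => by linarith [ht.1]
  have hderiv t (ht : t ∈ Icc y x) := hasDerivAt_add_rpow_mul_self μ (p - 2) t (hD t ht)
  refine (convex_Icc y x).mul_sub_le_image_sub_of_le_deriv
    (fun t ht => (hderiv t ht).continuousAt.continuousWithinAt)
    (fun t ht => (hderiv t (interior_subset ht)).differentiableAt.differentiableWithinAt)
    (fun t ht => ?_) y (left_mem_Icc.2 hyx) x (right_mem_Icc.2 hyx) hyx
  rw [interior_Icc] at ht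
  rw [(hderiv t (Ioo_subset_Icc_self ht)).deriv]
  have hmono : (μ + x + y) ^ (p - 2) ≤ (μ + t) ^ (p - 2) :=
    rpow_le_rpow_of_nonpos (hD t (Ioo_subset_Icc_self ht)) (by linarith [ht.2]) (by linarith)
  nlinarith [sub_one_mul_rpow_le_deriv hμ hp2 (hD t (Ioo_subset_Icc_self ht))]

lemma sub_one_mul_rpow_mul_sq_le {μ p x y : ℝ} (hμ : 0 ≤ μ) (hp1 : 1 ≤ p) (hp2 : p ≤ 2)
    (hx : 0 ≤ x) (hy : 0 ≤ y) :
    (p - 1) * (μ + x + y) ^ (p - 2) * (x - y) ^ 2 ≤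
      ((μ + x) ^ (p - 2) * x - (μ + y) ^ (p - 2) * y) * (x - y) := by
  rcases le_total y x with hyx | hxy
  · nlinarith [sub_one_mul_rpow_mul_sub_le hμ hp1 hp2 hy hyx]
  · have h := sub_one_mul_rpow_mul_sub_le hμ hp1 hp2 hx hxy
    rw [add_right_comm] at h
    nlinarith

lemma two_mul_rpow_le_rpow_add_rpow {μ p x y : ℝ} (hμ : 0 ≤ μ) (hp : p ≤ 2)
    (hx : 0 < x) (hy : 0 < y) :
    2 * (p - 1) * (μ + x + y) ^ (p - 2) ≤ (μ + x) ^ (p - 2) + (μ + y) ^ (p - 2) := by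
  have hxa : (μ + x + y) ^ (p - 2) ≤ (μ + x) ^ (p - 2) :=
    rpow_le_rpow_of_nonpos (by linarith) (by linarith) (by linarith)
  have hyb : (μ + x + y) ^ (p - 2) ≤ (μ + y) ^ (p - 2) :=
    rpow_le_rpow_of_nonpos (by linarith) (by linarith) (by linarith)
  nlinarith [rpow_nonneg (show 0 ≤ μ + x + y by linarith) (p - 2)]

theorem sub_one_mul_norm_sub_sq_mul_rpow_le_inner {E : Type*} [NormedAddCommGroup E]
    [InnerProductSpace ℝ E] {μ p : ℝ} (hμ : 0 ≤ μ) (hp1 : 1 ≤ p) (hp2 : p ≤ 2) (u v : E) :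
    (p - 1) * ‖u - v‖ ^ 2 * (μ + ‖u‖ + ‖v‖) ^ (p - 2) ≤
      ⟪(μ + ‖u‖) ^ (p - 2) • u - (μ + ‖v‖) ^ (p - 2) • v, u - v⟫ := by
  set x := ‖u‖
  set y := ‖v‖
  set s := ⟪u, v⟫
  set a := (μ + x) ^ (p - 2)
  set b := (μ + y) ^ (p - 2)
  have hs : |s| ≤ x * y := abs_real_inner_le_norm u v
  have hnorm : ‖u - v‖ ^ 2 = (x - y) ^ 2 + 2 * (x * y - s) := by
    rw [norm_sub_sq_real]; ring
  have hinner : ⟪a • u - b • v, u - v⟫ = (a * x - b * y) * (x - y) + (a + b) * (x * y - s) := by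
    simp only [inner_sub_left, inner_sub_right, real_inner_smul_left, real_inner_self_eq_norm_sq,
      real_inner_comm u v]
    ring
  have hcross : 2 * (p - 1) * (μ + x + y) ^ (p - 2) * (x * y - s) ≤ (a + b) * (x * y - s) := by
    by_cases hxy : x * y = 0
    · have hs0 : s = 0 := abs_nonpos_iff.1 (hxy ▸ hs)
      simp [hxy, hs0]
    · obtain ⟨hx, hy⟩ := mul_ne_zero_iff.1 hxy
      exact mul_le_mul_of_nonneg_right (two_mul_rpow_le_rpow_add_rpow hμ hp2
        ((norm_nonneg u).lt_of_ne' hx) ((norm_nonneg v).lt_of_ne' hy)) (by linarith [le_abs_self s])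
  rw [hnorm, hinner]
  nlinarith [sub_one_mul_rpow_mul_sq_le hμ hp1 hp2 (norm_nonneg u) (norm_nonneg v)]

namespace Matrix

variable {m k : Type*}

def toEuclidean : Matrix m k ℝ →ₗ[ℝ] EuclideanSpace ℝ (m × k) where
  toFun A := WithLp.toLp 2 fun q => A q.1 q.2
  map_add' _ _ := rfl
  map_smul' _ _ := rfl

@[simp]
lemma toEuclidean_apply (A : Matrix m k ℝ) (q : m × k) : toEuclidean A q = A q.1 q.2 := rfl

lemma norm_toEuclidean [Fintype m] [Fintype k] (A : Matrix m k ℝ) :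
    ‖toEuclidean A‖ = √(∑ i, ∑ j, A i j ^ 2) := by
  simp [EuclideanSpace.norm_eq, Fintype.sum_prod_type]

lemma inner_toEuclidean [Fintype m] [Fintype k] (A B : Matrix m k ℝ) :
    ⟪toEuclidean A, toEuclidean B⟫ = ∑ i, ∑ j, A i j * B i j := by
  simp [PiLp.inner_apply, Fintype.sum_prod_type, mul_comm]

end Matrix

/-- Monotonicity estimate for the p-structure tensor, 1 < p ≤ 2. -/
theorem statement0 (p : ℝ) (hp1 : 1 < p) (hp2 : p ≤ 2) :
    ∃ C₂ : ℝ, 0 < C₂ ∧ ∀ (n : ℕ) (μ : ℝ), 0 ≤ μ →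
      ∀ A B : Matrix (Fin n) (Fin n) ℝ, ¬(μ = 0 ∧ A = 0 ∧ B = 0) →
        C₂ * frob (A - B) ^ 2 / (μ + frob A + frob B) ^ (2 - p) ≤
          ∑ i, ∑ j, (Smap μ p A - Smap μ p B) i j * (A - B) i j := by
  refine ⟨p - 1, by linarith, fun n μ hμ A B _ => ?_⟩
  have hfrob (M : Matrix (Fin n) (Fin n) ℝ) : frob M = ‖M.toEuclidean‖ :=
    (M.norm_toEuclidean).symm
  have h := sub_one_mul_norm_sub_sq_mul_rpow_le_inner hμ hp1.le hp2 A.toEuclidean B.toEuclidean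
  rw [← map_sub, ← map_smul, ← map_smul, ← map_sub, Matrix.inner_toEuclidean,
    ← hfrob, ← hfrob, ← hfrob] at h
  rw [div_eq_mul_inv, ← rpow_neg (by simp only [hfrob]; positivity), neg_sub]
  simpa [Smap] using h
end

section
/- Let p with 1 < p ≤ 2 and μ ≥ 0, and define S(A) = (μ + |A|)^{p-2} A. Then there exists a constant C₃ > 0 (depending only on p) such that for all matrices A, B (not both zero if μ = 0): |S(A) - S(B)| ≤ C₃ |A - B| / (μ + |A| + |B|)^{2-p}. -/
open Finset

/-!
Write `r = p - 2 ∈ [-1, 0]` and assume `|B| ≤ |A|`, so `t = μ + |A| ≥ u = μ + |B|`. Then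
`S(A) - S(B) = t^r (A - B) - (u^r - t^r) B`, and since `|B| ≤ u` the second term is at most
`(u^r - t^r) u = u^(r+1) - t^r u ≤ t^(r+1) - t^r u = t^r (t - u) ≤ t^r |A - B|`,
by monotonicity of `z ↦ z^(r+1)`. As `t ≥ (μ + |A| + |B|) / 2` and `2^(-r) ≤ 2`, one gets `C₃ = 4`.
-/

lemma abs_rpow_sub_rpow_mul_le {r u t b : ℝ} (hr1 : -1 ≤ r) (hr0 : r ≤ 0) (hb : 0 ≤ b)
    (hbu : b ≤ u) (hut : u ≤ t) :
    |u ^ r - t ^ r| * b ≤ t ^ r * (t - u) := by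
  rcases (hb.trans hbu).eq_or_lt with rfl | hu
  · rw [le_antisymm hbu hb, mul_zero]
    exact mul_nonneg (Real.rpow_nonneg hut r) (by linarith)
  have ht : 0 < t := hu.trans_le hut
  have hdiff : 0 ≤ u ^ r - t ^ r := sub_nonneg.2 (Real.rpow_le_rpow_of_nonpos hu hut hr0)
  rw [abs_of_nonneg hdiff]
  calc (u ^ r - t ^ r) * b ≤ (u ^ r - t ^ r) * u := mul_le_mul_of_nonneg_left hbu hdiff
    _ = u ^ (r + 1) - t ^ r * u := by rw [Real.rpow_add_one hu.ne']; ring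
    _ ≤ t ^ (r + 1) - t ^ r * u := by gcongr; linarith
    _ = t ^ r * (t - u) := by rw [Real.rpow_add_one ht.ne']; ring

lemma rpow_le_two_mul_rpow {r t w : ℝ} (hr1 : -1 ≤ r) (hr0 : r ≤ 0) (hw : 0 < w)
    (hwt : w ≤ 2 * t) :
    t ^ r ≤ 2 * w ^ r := by
  have ht : 0 < t := by linarith
  calc t ^ r = 2 ^ (-r) * (2 * t) ^ r := by
        rw [Real.mul_rpow zero_le_two ht.le, ← mul_assoc, ← Real.rpow_add zero_lt_two,
          neg_add_cancel, Real.rpow_zero, one_mul]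
    _ ≤ 2 ^ (1 : ℝ) * w ^ r := by
        gcongr ?_ * ?_
        · exact Real.rpow_le_rpow_of_exponent_le one_le_two (by linarith)
        · exact Real.rpow_le_rpow_of_nonpos hw hwt hr0
    _ = 2 * w ^ r := by rw [Real.rpow_one]

section NormedSpace

variable {E : Type*} [NormedAddCommGroup E] [NormedSpace ℝ E]

lemma norm_rpow_smul_sub_rpow_smul_le_of_norm_le {μ r : ℝ} (hμ : 0 ≤ μ) (hr1 : -1 ≤ r)
    (hr0 : r ≤ 0) {x y : E} (hyx : ‖y‖ ≤ ‖x‖) :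
    ‖(μ + ‖x‖) ^ r • x - (μ + ‖y‖) ^ r • y‖ ≤ 2 * (μ + ‖x‖) ^ r * ‖x - y‖ := by
  set t := μ + ‖x‖
  set u := μ + ‖y‖
  have htr : 0 ≤ t ^ r := Real.rpow_nonneg (by positivity) r
  have hsplit : t ^ r • x - u ^ r • y = t ^ r • (x - y) - (u ^ r - t ^ r) • y := by module
  have hnorm : t - u ≤ ‖x - y‖ := by simpa [t, u] using norm_sub_norm_le x y
  calc ‖t ^ r • x - u ^ r • y‖ ≤ t ^ r * ‖x - y‖ + |u ^ r - t ^ r| * ‖y‖ := by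
        rw [hsplit]
        refine (norm_sub_le _ _).trans_eq ?_
        rw [norm_smul, norm_smul, Real.norm_of_nonneg htr, Real.norm_eq_abs]
    _ ≤ t ^ r * ‖x - y‖ + t ^ r * (t - u) := by
        refine add_le_add le_rfl ?_
        exact abs_rpow_sub_rpow_mul_le hr1 hr0 (norm_nonneg y) (le_add_of_nonneg_left hμ)
          (add_le_add_right hyx μ)
    _ ≤ 2 * t ^ r * ‖x - y‖ := by nlinarith

lemma norm_rpow_smul_sub_rpow_smul_le {μ r : ℝ} (hμ : 0 ≤ μ) (hr1 : -1 ≤ r) (hr0 : r ≤ 0)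
    {x y : E} (hpos : 0 < μ + ‖x‖ + ‖y‖) :
    ‖(μ + ‖x‖) ^ r • x - (μ + ‖y‖) ^ r • y‖ ≤ 4 * (μ + ‖x‖ + ‖y‖) ^ r * ‖x - y‖ := by
  wlog hyx : ‖y‖ ≤ ‖x‖ generalizing x y
  · rw [norm_sub_rev, norm_sub_rev x, add_right_comm]
    exact this (by linarith) (le_of_not_ge hyx)
  calc ‖(μ + ‖x‖) ^ r • x - (μ + ‖y‖) ^ r • y‖ ≤ 2 * (μ + ‖x‖) ^ r * ‖x - y‖ :=
        norm_rpow_smul_sub_rpow_smul_le_of_norm_le hμ hr1 hr0 hyx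
    _ ≤ 2 * (2 * (μ + ‖x‖ + ‖y‖) ^ r) * ‖x - y‖ := by
        gcongr
        exact rpow_le_two_mul_rpow hr1 hr0 hpos (by linarith)
    _ = 4 * (μ + ‖x‖ + ‖y‖) ^ r * ‖x - y‖ := by ring

end NormedSpace

attribute [local instance] Matrix.frobeniusNormedAddCommGroup Matrix.frobeniusNormedSpace

lemma frob_eq_norm {n : ℕ} (A : Matrix (Fin n) (Fin n) ℝ) : frob A = ‖A‖ := by
  simp [frob, Matrix.frobenius_norm_def, Real.sqrt_eq_rpow]

/-- Lipschitz-type estimate for the p-structure tensor, 1 < p ≤ 2. -/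
theorem statement1 (p : ℝ) (hp1 : 1 < p) (hp2 : p ≤ 2) :
    ∃ C₃ : ℝ, 0 < C₃ ∧ ∀ (n : ℕ) (μ : ℝ), 0 ≤ μ →
      ∀ A B : Matrix (Fin n) (Fin n) ℝ, ¬(μ = 0 ∧ A = 0 ∧ B = 0) →
        frob (Smap μ p A - Smap μ p B) ≤
          C₃ * frob (A - B) / (μ + frob A + frob B) ^ (2 - p) := by
  refine ⟨4, four_pos, fun n μ hμ A B hne => ?_⟩
  have hpos : 0 < μ + ‖A‖ + ‖B‖ := by
    by_contra! h
    exact hne ⟨by linarith [norm_nonneg A, norm_nonneg B],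
      norm_le_zero_iff.1 (by linarith [norm_nonneg B]),
      norm_le_zero_iff.1 (by linarith [norm_nonneg A])⟩
  simp only [Smap, frob_eq_norm]
  rw [div_eq_mul_inv, ← Real.rpow_neg hpos.le, neg_sub, mul_right_comm]
  exact norm_rpow_smul_sub_rpow_smul_le hμ (by linarith) (by linarith) hpos
end
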